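/- Let M be a countable coarse group satisfying the negative-expression axiom and such that the product of full filters is associative, and let W be a *subgroup of M satisfying: for every *subgroup U and every A ∈ LC(U) with A ≠ U, there is a *subgroup U' ⊑ U such that for every A' ⊑ A with A' ∈ LC(U') there are C ∈ LC(W) and D ∈ LC(W) with D ≠ C and A'C ⊑ D. Then the action of F(M) on LC(W) is faithful: for every full filter x with x ≠ 1 there is C ∈ LC(W) with x·C ≠ C. -/
import Mathlib


/-! Abstract coarse groups (Nies–Schlicht–Tent). -/

namespace CoarsePaper

/-- A structure with one ternary relation `rel A B C`, read "AB ⊑ C". -/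
structure CG (M : Type) : Type where
  rel : M → M → M → Prop

variable {M : Type}

/-- `U` is a *subgroup: `UU ⊑ U`. -/
def IsSub (c : CG M) (U : M) : Prop := c.rel U U U

/-- For *subgroups, `U ⊑ V` means `UV ⊑ V`. -/
def sle (c : CG M) (U V : M) : Prop := c.rel U V V

/-- `A ∈ LC(U)`: `U` is the ⊑-maximum *subgroup with `AU ⊑ A`. -/
def LC (c : CG M) (U A : M) : Prop :=
  IsSub c U ∧ c.rel A U A ∧ ∀ V, IsSub c V → c.rel A V A → sle c V U

/-- `A ∈ RC(U)`: `U` is the ⊑-maximum *subgroup with `UA ⊑ A`. -/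
def RC (c : CG M) (U A : M) : Prop :=
  IsSub c U ∧ c.rel U A A ∧ ∀ V, IsSub c V → c.rel V A A → sle c V U

/-- `A ⊑ B` for arbitrary elements: `AU ⊑ B` for some *subgroup `U` with `A ∈ LC(U)`. -/
def cle (c : CG M) (A B : M) : Prop := ∃ U, LC c U A ∧ c.rel A U B

/-- `A`, `B` are disjoint: there are no `C`, `D` with `CD ⊑ A` and `CD ⊑ B`. -/
def Disj (c : CG M) (A B : M) : Prop := ¬ ∃ C D, c.rel C D A ∧ c.rel C D B

/-- `S(A,B)`: there is a *subgroup `V` with `A ∈ RC(V)`, `B ∈ LC(V)`, `AB ⊑ V`;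
we then write `B = A⋄`. -/
def Srel (c : CG M) (A B : M) : Prop :=
  ∃ V, RC c V A ∧ LC c V B ∧ c.rel A B V

/-- The axioms of a coarse group. -/
structure Axioms (c : CG M) : Prop where
  -- (0a) ⊑ is a partial order on *subgroups in which any two elements have a meet
  sle_refl : ∀ U, IsSub c U → sle c U U
  sle_antisymm : ∀ U V, IsSub c U → IsSub c V → sle c U V → sle c V U → U = V
  sle_trans : ∀ U V W, IsSub c U → IsSub c V → IsSub c W → sle c U V → sle c V W → sle c U W
  meet : ∀ U V, IsSub c U → IsSub c V → ∃ W, IsSub c W ∧ sle c W U ∧ sle c W V ∧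
    ∀ T, IsSub c T → sle c T U → sle c T V → sle c T W
  -- (0b) every element is a left *coset and a right *coset of some *subgroup
  exists_lc : ∀ A, ∃ U, LC c U A
  exists_rc : ∀ A, ∃ U, RC c U A
  -- (0c) ⊑ is a partial order on M extending ⊑ on *subgroups
  cle_refl : ∀ A, cle c A A
  cle_antisymm : ∀ A B, cle c A B → cle c B A → A = B
  cle_trans : ∀ A B C, cle c A B → cle c B C → cle c A C
  cle_ext : ∀ U V, IsSub c U → IsSub c V → (cle c U V ↔ sle c U V)
  -- (1)
  lc_up : ∀ U' U A', IsSub c U' → IsSub c U → sle c U' U → LC c U' A' →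
    ∃ A, LC c U A ∧ cle c A' A
  lc_disj : ∀ U' U A' A, IsSub c U' → IsSub c U → sle c U' U → LC c U' A' → LC c U A →
    cle c A' A ∨ Disj c A' A
  rc_up : ∀ U' U A', IsSub c U' → IsSub c U → sle c U' U → RC c U' A' →
    ∃ A, RC c U A ∧ cle c A' A
  rc_disj : ∀ U' U A' A, IsSub c U' → IsSub c U → sle c U' U → RC c U' A' → RC c U A →
    cle c A' A ∨ Disj c A' A
  -- (2) monotonicity
  mono : ∀ A₀ A₁ B₀ B₁ C, c.rel B₀ B₁ C → cle c A₀ B₀ → cle c A₁ B₁ → c.rel A₀ A₁ C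
  -- (3)
  lc_sub_iff : ∀ U V B, IsSub c U → IsSub c V → LC c V B →
    (sle c U V ↔ ∃ A, LC c U A ∧ cle c A B)
  rc_sub_iff : ∀ U V B, IsSub c U → IsSub c V → RC c V B →
    (sle c U V ↔ ∃ A, RC c U A ∧ cle c A B)
  -- (4) inverses
  srel_existsUnique : ∀ A, ∃! B, Srel c A B
  srel_symm : ∀ A B, Srel c A B → Srel c B A
  srel_orderIso : ∀ A B A' B', Srel c A A' → Srel c B B' → (cle c A B ↔ cle c A' B')
  -- (5) products of compatible *cosets
  prod_exists : ∀ U V W A B, RC c U A → LC c V A → RC c V B → LC c W B →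
    ∃ C, RC c U C ∧ LC c W C ∧ c.rel A B C ∧ ∀ D, c.rel A B D → cle c C D

/-- A full filter on `M`. -/
structure FullFilter (c : CG M) (x : Set M) : Prop where
  up : ∀ A ∈ x, ∀ B, cle c A B → B ∈ x
  directed : ∀ A ∈ x, ∀ B ∈ x, ∃ C ∈ x, cle c C A ∧ cle c C B
  lc_mem : ∀ U, IsSub c U → ∃ A ∈ x, LC c U A
  rc_mem : ∀ U, IsSub c U → ∃ A ∈ x, RC c U A

/-- The product of two filters: `x·y = {C : ∃ A ∈ x, B ∈ y, AB ⊑ C}`. -/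
def fprod (c : CG M) (x y : Set M) : Set M :=
  {C | ∃ A ∈ x, ∃ B ∈ y, c.rel A B C}

/-- The inverse of a filter: `x⁻¹ = {A⋄ : A ∈ x}`. -/
def finv (c : CG M) (x : Set M) : Set M :=
  {B | ∃ A ∈ x, Srel c A B}

/-- The identity filter: generated by the *subgroups. -/
def fone (c : CG M) : Set M := {C | ∃ U, IsSub c U ∧ cle c U C}

/-- The space `F(M)` of full filters on `M`. -/
abbrev FF (c : CG M) : Type := {x : Set M // FullFilter c x}

/-- The topology on `F(M)` generated by the sets `Â = {x : A ∈ x}`. -/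
def ffTop (c : CG M) : TopologicalSpace (FF c) :=
  TopologicalSpace.generateFrom {S | ∃ A : M, S = {x : FF c | A ∈ x.1}}

/-- `Â`, as a collection of subsets of `M`: the full filters containing `A`. -/
def hatS (c : CG M) (A : M) : Set (Set M) := {x | FullFilter c x ∧ A ∈ x}

/-- Associativity of the product of full filters. -/
def FAssoc (c : CG M) : Prop :=
  ∀ x y z : Set M, FullFilter c x → FullFilter c y → FullFilter c z →
    fprod c (fprod c x y) z = fprod c x (fprod c y z)

/-- The negative-expression axiom. -/
structure NegAx (c : CG M) : Prop where
  rel_iff : ∀ A B C, c.rel A B C ↔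
    ¬ ∃ D E F, cle c D A ∧ cle c E B ∧ c.rel D E F ∧ Disj c C F
  le_iff : ∀ A B, cle c A B ↔ ¬ ∃ C, cle c C A ∧ Disj c B C

/-- The action of a filter on a *coset: `x·A = B` iff `SA ⊑ B` for some `S ∈ x`. -/
def act (c : CG M) (x : Set M) (A B : M) : Prop := ∃ S ∈ x, c.rel S A B

/-- `𝒱 ⊆ F(M)` is a subgroup of the filter group `F(M)`. -/
def IsSubgroupFF (c : CG M) (V : Set (FF c)) : Prop :=
  (∀ z : FF c, z.1 = fone c → z ∈ V) ∧
  (∀ u ∈ V, ∀ v ∈ V, ∀ w : FF c, w.1 = fprod c u.1 v.1 → w ∈ V) ∧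
  (∀ u ∈ V, ∀ w : FF c, w.1 = finv c u.1 → w ∈ V)

/-- The union of double cosets `⋃_{i<n} V̂·Â_i`, as a collection of subsets of `M`
(the underlying sets of the full filters belonging to it). -/
def doubleUnion (c : CG M) (V : M) {n : ℕ} (A : Fin n → M) : Set (Set M) :=
  {z | ∃ i : Fin n, ∃ u v : Set M, FullFilter c u ∧ FullFilter c v ∧ V ∈ u ∧ A i ∈ v ∧
    z = fprod c u v}

/-- The coset-recognition axiom. -/
def CosetRec (c : CG M) : Prop :=
  ∀ V, IsSub c V → ∀ n : ℕ, 1 ≤ n → ∀ A : Fin n → M, (∀ i, LC c V (A i)) →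
    (fone c ∈ doubleUnion c V A ∧
     (∀ p ∈ doubleUnion c V A, ∀ q ∈ doubleUnion c V A, fprod c p q ∈ doubleUnion c V A) ∧
     (∀ p ∈ doubleUnion c V A, finv c p ∈ doubleUnion c V A)) →
    ∃ U, IsSub c U ∧ (∀ i, c.rel V (A i) U) ∧
      ∀ z : Set M, FullFilter c z → U ∈ z → z ∈ doubleUnion c V A

/-- Roelcke precompactness of the filter group `F(M)`: every open neighbourhood `𝒰` of the
identity satisfies `F(M) = 𝒰·F·𝒰` for some finite `F`. -/
def RoelckeFF (c : CG M) : Prop :=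
  ∀ U : Set (FF c), @IsOpen (FF c) (ffTop c) U → (∀ z : FF c, z.1 = fone c → z ∈ U) →
    ∃ F : Set (FF c), F.Finite ∧
      ∀ z : FF c, ∃ u ∈ U, ∃ f ∈ F, ∃ v ∈ U, z.1 = fprod c (fprod c u.1 f.1) v.1


/-- The *subgroup of which `A` is a left *coset is unique. -/
lemma lc_unique (c : CG M) (ax : Axioms c) {U V A : M} (h1 : LC c U A) (h2 : LC c V A) :
    U = V :=
  ax.sle_antisymm U V h1.1 h2.1 (h2.2.2 U h1.1 h1.2.1) (h1.2.2 V h2.1 h2.2.1)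

/-- If `A ∈ LC(U)` and `A ⊑ B`, then `AU ⊑ B`. -/
lemma cle_rel (c : CG M) (ax : Axioms c) {A B U : M} (hU : LC c U A) (h : cle c A B) :
    c.rel A U B := by
  obtain ⟨V, hV, hr⟩ := h
  have hUV := lc_unique c ax hU hV
  rwa [hUV]

/-- Key step: if the action of a full filter `x` fixes every left *coset of `W`,
then every element of `x` is a *subgroup. -/
lemma key_step (c : CG M) (ax : Axioms c) (W : M) (hW : IsSub c W)
    (hdelta : ∀ U, IsSub c U → ∀ A, LC c U A → A ≠ U →
      ∃ U', IsSub c U' ∧ sle c U' U ∧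
        ∀ A', cle c A' A → LC c U' A' →
          ∃ C D, LC c W C ∧ LC c W D ∧ D ≠ C ∧ c.rel A' C D)
    (x : Set M) (hx : FullFilter c x)
    (hfix : ∀ C, LC c W C → ∃ S ∈ x, c.rel S C C)
    {A U : M} (hA : A ∈ x) (hU : LC c U A) : A = U := by
  by_contra hne
  obtain ⟨U', hU'sub, hU'le, hP⟩ := hdelta U hU.1 A hU hne
  -- find A' ∈ x with A' ∈ LC(U') and A' ⊑ A
  obtain ⟨A'', hA''x, hA''⟩ := hx.lc_mem U' hU'sub
  obtain ⟨B, hBx, hBA, hBA''⟩ := hx.directed A hA A'' hA''x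
  obtain ⟨UB, hUB⟩ := ax.exists_lc B
  have hrBA'' : c.rel B UB A'' := cle_rel c ax hUB hBA''
  have hrBA : c.rel B UB A := cle_rel c ax hUB hBA
  have hUBU' : sle c UB U' :=
    (ax.lc_sub_iff UB U' A'' hUB.1 hU'sub hA'').2 ⟨B, hUB, hBA''⟩
  obtain ⟨A', hA', hBA'⟩ := ax.lc_up UB U' B hUB.1 hU'sub hUBU' hUB
  have hrBA' : c.rel B UB A' := cle_rel c ax hUB hBA'
  have hA'A : cle c A' A := by
    rcases ax.lc_disj U' U A' A hU'sub hU.1 hU'le hA' hU with h | h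
    · exact h
    · exact absurd ⟨B, UB, hrBA', hrBA⟩ h
  have hA'x : A' ∈ x := hx.up B hBx A' hBA'
  obtain ⟨C, D, hC, hD, hDC, hrel⟩ := hP A' hA'A hA'
  obtain ⟨S, hSx, hSC⟩ := hfix C hC
  obtain ⟨T, hTx, hTA', hTS⟩ := hx.directed A' hA'x S hSx
  have hTCC : c.rel T C C := ax.mono T C S C C hSC hTS (ax.cle_refl C)
  have hTCD : c.rel T C D := ax.mono T C A' C D hrel hTA' (ax.cle_refl C)
  have hCD : cle c C D := by
    rcases ax.lc_disj W W C D hW hW (ax.sle_refl W hW) hC hD with h | h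
    · exact h
    · exact absurd ⟨T, C, hTCC, hTCD⟩ h
  have hDC' : cle c D C := by
    rcases ax.lc_disj W W D C hW hW (ax.sle_refl W hW) hD hC with h | h
    · exact h
    · exact absurd ⟨T, C, hTCD, hTCC⟩ h
  exact hDC (ax.cle_antisymm D C hDC' hCD)

/-- if `δ(W)` holds then the action of `F(M)` on `LC(W)` is faithful. -/
theorem stmt17 (c : CG M) [Countable M] (ax : Axioms c) (nax : NegAx c) (hassoc : FAssoc c)
    (W : M) (hW : IsSub c W)
    (hdelta : ∀ U, IsSub c U → ∀ A, LC c U A → A ≠ U →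
      ∃ U', IsSub c U' ∧ sle c U' U ∧
        ∀ A', cle c A' A → LC c U' A' →
          ∃ C D, LC c W C ∧ LC c W D ∧ D ≠ C ∧ c.rel A' C D)
    (x : Set M) (hx : FullFilter c x) (hx1 : x ≠ fone c) :
    ∃ C, LC c W C ∧ ¬ ∃ S ∈ x, c.rel S C C := by
  by_contra h
  push_neg at h
  have hfix : ∀ C, LC c W C → ∃ S ∈ x, c.rel S C C := by
    intro C hC
    rcases h C hC with ⟨S, hS, hr⟩
    exact ⟨S, hS, hr⟩
  apply hx1
  apply Set.eq_of_subset_of_subset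
  · intro A hA
    obtain ⟨U, hU⟩ := ax.exists_lc A
    have hAU := key_step c ax W hW hdelta x hx hfix hA hU
    refine ⟨A, ?_, ax.cle_refl A⟩
    rw [hAU]; exact hU.1
  · rintro C ⟨U, hUsub, hUC⟩
    obtain ⟨A, hAx, hA⟩ := hx.lc_mem U hUsub
    have hAU := key_step c ax W hW hdelta x hx hfix hAx hA
    subst hAU
    exact hx.up A hAx C hUC

end CoarsePaper
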